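/- arXiv:2003.08911 — 4 statements merged into one kernel-verified Lean document; each statement's English description precedes it below -/
import Mathlib

section
/- Let L ⊆ ℝ^n be a linear subspace, i ∈ {1,...,n}, and suppose every x ∈ L ∩ ℝ^n_+ satisfies x_i ≤ ‖x‖_∞ / 2. Let D = I + e_i e_iᵀ. Then {x ∈ L ∩ ℝ^n_+ : ‖x‖_∞ ≤ 1} = {x ∈ L ∩ ℝ^n_+ : ‖Dx‖_∞ ≤ 1}. -/
noncomputable section

/-- The ℓ∞ norm of a vector in ℝⁿ. -/
def linf {n : ℕ} (x : Fin n → ℝ) : ℝ := ⨆ j, |x j|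

open Classical in
/-- The map `D = I + eᵢeᵢᵀ`, which doubles the `i`-th coordinate
and fixes all other coordinates. -/
def Dmap {n : ℕ} (i : Fin n) (x : Fin n → ℝ) : Fin n → ℝ :=
  fun j => if j = i then 2 * x j else x j

/-- If every `x ∈ L ∩ ℝⁿ₊` satisfies `x_i ≤ ‖x‖_∞ / 2`, then
`{x ∈ L ∩ ℝⁿ₊ : ‖x‖_∞ ≤ 1} = {x ∈ L ∩ ℝⁿ₊ : ‖Dx‖_∞ ≤ 1}` for `D = I + eᵢeᵢᵀ`. -/
theorem rescaled_feasible_set_eq {n : ℕ} (L : Submodule ℝ (Fin n → ℝ)) (i : Fin n)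
    (h : ∀ x ∈ L, (∀ k, 0 ≤ x k) → x i ≤ linf x / 2) :
    {x : Fin n → ℝ | x ∈ L ∧ (∀ k, 0 ≤ x k) ∧ linf x ≤ 1} =
      {x : Fin n → ℝ | x ∈ L ∧ (∀ k, 0 ≤ x k) ∧ linf (Dmap i x) ≤ 1} := by
  have key : ∀ x : Fin n → ℝ, x ∈ L → (∀ k, 0 ≤ x k) →
      linf (Dmap i x) = linf x := by
    intro x hxL hxpos
    have : Nonempty (Fin n) := ⟨i⟩
    have hbdd : BddAbove (Set.range fun j => |x j|) :=
      (Set.finite_range _).bddAbove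
    have hbdd' : BddAbove (Set.range fun j => |Dmap i x j|) :=
      (Set.finite_range _).bddAbove
    have hle : ∀ j, |x j| ≤ linf x := fun j => le_ciSup hbdd j
    apply le_antisymm
    · apply ciSup_le
      intro j
      by_cases hj : j = i
      · subst hj
        have := h x hxL hxpos
        have h2 : 2 * x j ≤ linf x := by linarith
        simp only [Dmap]
        split
        · rw [abs_of_nonneg (by have := hxpos j; linarith)]
          exact h2
        · next h' => exact absurd trivial h'
      · simp only [Dmap, if_neg hj]
        exact hle j
    · apply ciSup_le
      intro j
      refine le_trans ?_ (le_ciSup hbdd' j)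
      simp only [Dmap]
      split
      · rw [abs_of_nonneg (hxpos j), abs_of_nonneg (by have := hxpos j; positivity)]
        linarith [hxpos j]
      · exact le_refl _
  ext x
  simp only [Set.mem_setOf_eq]
  constructor
  · rintro ⟨h1, h2, h3⟩
    exact ⟨h1, h2, by rw [key x h1 h2]; exact h3⟩
  · rintro ⟨h1, h2, h3⟩
    exact ⟨h1, h2, by rw [key x h1 h2] at h3; exact h3⟩

end
end

section
/- Let A = [a_1 ⋯ a_n] ∈ ℝ^{m×n} be a full row-rank matrix whose columns all have Euclidean norm one, and let L^⊥ = {Aᵀy : y ∈ ℝ^m}. If ρ(A) > 0 then ρ(A) ≤ σ(L^⊥). -/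
noncomputable section
open Matrix

/-- The Euclidean norm of a vector in ℝᵐ. -/
def eNorm {m : ℕ} (y : Fin m → ℝ) : ℝ := Real.sqrt (∑ k, y k ^ 2)

/-- The condition measure `ρ(A) := max_{‖y‖₂ = 1} min_{i} ⟨a_i, y⟩`,
where `a_1, …, a_n` are the columns of `A`. -/
def rho {m n : ℕ} (A : Matrix (Fin m) (Fin n) ℝ) : ℝ :=
  sSup {t | ∃ y : Fin m → ℝ, eNorm y = 1 ∧ t = ⨅ i, ∑ k, A k i * y k}

/-- The maximum support index set `J(S)` of a set `S ⊆ ℝⁿ`: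
indices `j` such that `x_j > 0` for some nonnegative `x ∈ S`. -/
def maxSupport {n : ℕ} (S : Set (Fin n → ℝ)) : Set (Fin n) :=
  {j | ∃ x ∈ S, (∀ k, 0 ≤ x k) ∧ 0 < x j}

/-- `σ_j(S) := max {x_j : x ∈ S ∩ ℝⁿ₊, ‖x‖_∞ ≤ 1}`. -/
def sigmaJ {n : ℕ} (S : Set (Fin n → ℝ)) (j : Fin n) : ℝ :=
  sSup {t | ∃ x ∈ S, (∀ k, 0 ≤ x k) ∧ linf x ≤ 1 ∧ x j = t}

open Classical in
/-- `σ(S) := min_{j ∈ J(S)} σ_j(S)` when `J(S) ≠ ∅`, and `σ(S) := 1` otherwise. -/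
def sigmaCond {n : ℕ} (S : Set (Fin n → ℝ)) : ℝ :=
  if maxSupport S = ∅ then 1 else sInf (sigmaJ S '' maxSupport S)

/-- For a full row-rank matrix `A` with unit columns and `L^⊥ = {Aᵀy : y ∈ ℝᵐ}`:
if `ρ(A) > 0` then `ρ(A) ≤ σ(L^⊥)`. -/
theorem rho_le_sigma_perp {m n : ℕ} (hn : 0 < n) (A : Matrix (Fin m) (Fin n) ℝ)
    (hrank : A.rank = m) (hcols : ∀ i, eNorm (fun k => A k i) = 1)
    (hpos : 0 < rho A) :
    rho A ≤ sigmaCond ((LinearMap.range Aᵀ.mulVecLin : Submodule ℝ (Fin n → ℝ)) :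
      Set (Fin n → ℝ)) := by
  classical
  set L : Set (Fin n → ℝ) :=
    ((LinearMap.range Aᵀ.mulVecLin : Submodule ℝ (Fin n → ℝ)) : Set (Fin n → ℝ)) with hL
  set S : Set ℝ := {t | ∃ y : Fin m → ℝ, eNorm y = 1 ∧ t = ⨅ i, ∑ k, A k i * y k} with hSdef
  have hrho : rho A = sSup S := rfl
  -- Cauchy–Schwarz bound
  have key : ∀ (y : Fin m → ℝ), eNorm y = 1 → ∀ i, |∑ k, A k i * y k| ≤ 1 := by
    intro y hy i
    have h1 : ∑ k, A k i ^ 2 = 1 := by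
      have h := hcols i
      unfold eNorm at h
      simp only at h
      have hnn : (0:ℝ) ≤ ∑ k, A k i ^ 2 := Finset.sum_nonneg (fun k _ => sq_nonneg (A k i))
      nlinarith [Real.sq_sqrt hnn]
    have h2 : ∑ k, y k ^ 2 = 1 := by
      unfold eNorm at hy
      have hnn : (0:ℝ) ≤ ∑ k, y k ^ 2 := Finset.sum_nonneg (fun k _ => sq_nonneg (y k))
      nlinarith [Real.sq_sqrt hnn]
    have hcs : (∑ k, A k i * y k) ^ 2 ≤ (∑ k, A k i ^ 2) * (∑ k, y k ^ 2) :=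
      Finset.sum_mul_sq_le_sq_mul_sq Finset.univ _ _
    rw [h1, h2, mul_one] at hcs
    exact (sq_le_one_iff_abs_le_one _).mp hcs
  -- each element of S is bounded below/above coordinatewise
  have hbdd : ∀ (y : Fin m → ℝ), eNorm y = 1 →
      BddBelow (Set.range fun i => ∑ k, A k i * y k) := by
    intro y hy
    refine ⟨-1, ?_⟩
    rintro _ ⟨i, rfl⟩
    linarith [(abs_le.mp (key y hy i)).1]
  -- membership of Aᵀ y in L
  have hmem : ∀ (y : Fin m → ℝ), (fun j => ∑ k, A k j * y k) ∈ L := by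
    intro y
    refine ⟨y, ?_⟩
    funext j
    show (Aᵀ *ᵥ y) j = ∑ k, A k j * y k
    simp [Matrix.mulVec, dotProduct, Matrix.transpose_apply]
  -- S is bounded above by 1
  have hSbdd : BddAbove S := by
    refine ⟨1, ?_⟩
    rintro t ⟨y, hy, rfl⟩
    calc (⨅ i, ∑ k, A k i * y k) ≤ ∑ k, A k ⟨0, hn⟩ * y k := ciInf_le (hbdd y hy) _
      _ ≤ 1 := (abs_le.mp (key y hy ⟨0, hn⟩)).2
  -- S is nonempty
  have hSne : S.Nonempty := by
    by_contra h
    rw [Set.not_nonempty_iff_eq_empty] at h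
    rw [hrho, h, Real.sSup_empty] at hpos
    exact lt_irrefl 0 hpos
  -- get a positive element of S with witness y
  obtain ⟨t, htS, htpos⟩ : ∃ t ∈ S, 0 < t := by
    obtain ⟨t, htS, ht⟩ := (lt_csSup_iff hSbdd hSne).mp hpos
    exact ⟨t, htS, ht⟩
  obtain ⟨y, hy, hty⟩ := htS
  set x : Fin n → ℝ := fun j => ∑ k, A k j * y k with hx
  have hxj : ∀ j, t ≤ x j := by
    intro j
    rw [hty]
    exact ciInf_le (hbdd y hy) j
  have hxpos : ∀ j, 0 < x j := fun j => lt_of_lt_of_le htpos (hxj j)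
  -- maxSupport is everything
  have hJ : ∀ j : Fin n, j ∈ maxSupport L := by
    intro j
    exact ⟨x, hmem y, fun k => (hxpos k).le, hxpos j⟩
  have hJne : maxSupport L ≠ ∅ := by
    intro h
    exact absurd (hJ ⟨0, hn⟩) (by simp [h])
  -- sigmaJ sets are bounded above by 1
  have hTbdd : ∀ j : Fin n, ∀ s ∈ {t | ∃ x ∈ L, (∀ k, 0 ≤ x k) ∧ linf x ≤ 1 ∧ x j = t},
      s ≤ 1 := by
    rintro j s ⟨x', _, hx'nn, hx'linf, rfl⟩
    have h1 : |x' j| ≤ linf x' := le_ciSup (f := fun k => |x' k|) ((Set.finite_range _).bddAbove) j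
    calc x' j ≤ |x' j| := le_abs_self _
      _ ≤ 1 := h1.trans hx'linf
  -- rho ≤ sigmaJ for every j
  have hmain : ∀ j : Fin n, rho A ≤ sigmaJ L j := by
    intro j
    rw [hrho]
    have hσnn : 0 ≤ sigmaJ L j := by
      apply Real.sSup_nonneg
      rintro _ ⟨x', _, hx'nn, _, rfl⟩
      exact hx'nn j
    refine Real.sSup_le ?_ hσnn
    rintro t' ⟨y', hy', rfl⟩
    rcases le_or_gt (⨅ i, ∑ k, A k i * y' k) 0 with h0 | h0
    · exact h0.trans hσnn
    · set x' : Fin n → ℝ := fun j => ∑ k, A k j * y' k with hx'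
      have hx'j : ∀ i, (⨅ i, ∑ k, A k i * y' k) ≤ x' i := fun i => ciInf_le (hbdd y' hy') i
      have hx'nn : ∀ i, 0 ≤ x' i := fun i => le_of_lt (lt_of_lt_of_le h0 (hx'j i))
      have hx'linf : linf x' ≤ 1 := by
        refine Real.iSup_le (fun i => key y' hy' i) zero_le_one
      have hx'mem : x' j ∈ {t | ∃ x ∈ L, (∀ k, 0 ≤ x k) ∧ linf x ≤ 1 ∧ x j = t} :=
        ⟨x', hmem y', hx'nn, hx'linf, rfl⟩
      calc (⨅ i, ∑ k, A k i * y' k) ≤ x' j := hx'j j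
        _ ≤ sigmaJ L j := le_csSup ⟨1, fun s hs => hTbdd j s hs⟩ hx'mem
  -- conclude
  rw [sigmaCond, if_neg hJne]
  refine le_csInf ⟨sigmaJ L ⟨0, hn⟩, Set.mem_image_of_mem _ (hJ ⟨0, hn⟩)⟩ ?_
  rintro b ⟨j, _, rfl⟩
  exact hmain j

end
end

section
/- Let A = [a_1 ⋯ a_n] ∈ ℝ^{m×n} be a full row-rank matrix whose columns all have Euclidean norm one, and let L = {x ∈ ℝ^n : Ax = 0}. If ρ(A) < 0 then |ρ(A)| ≤ σ(L). -/
/-!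
If `ρ(A) < 0`, every unit vector `y` has a column with `⟪a_i, y⟫ ≤ ρ(A)`, so by separation the
ball of radius `|ρ(A)|` lies in the convex hull of the columns (which forces `|ρ(A)| ≤ 1`, the
columns being unit vectors). Hence `-|ρ(A)| a_j = ∑ μ_i a_i` for a probability vector `μ`, and
`x = μ + |ρ(A)| e_j` is a nonnegative vector of `L` with `|ρ(A)| ‖x‖_∞ ≤ x_j`. Since `x / ‖x‖_∞`
is feasible for `σ_j(L)`, this gives `|ρ(A)| ≤ σ_j(L)` for every `j`.
-/

noncomputable section
open Matrix

open RealInnerProductSpace Set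

section Separation

variable {E : Type*} [NormedAddCommGroup E] [InnerProductSpace ℝ E] [CompleteSpace E]

theorem exists_inner_lt_of_notMem {s : Set E} {v : E} (hs : Convex ℝ s) (hs' : IsClosed s)
    (hv : v ∉ s) : ∃ y : E, ∀ b ∈ s, ⟪v, y⟫ < ⟪b, y⟫ := by
  obtain ⟨f, u, hfv, hfs⟩ := geometric_hahn_banach_point_closed hs hs' hv
  refine ⟨(InnerProductSpace.toDual ℝ E).symm f, fun b hb => ?_⟩
  simp only [real_inner_comm _ v, real_inner_comm _ b, InnerProductSpace.toDual_symm_apply]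
  exact hfv.trans (hfs b hb)

theorem closedBall_zero_subset_convexHull_range {ι : Type*} [Finite ι] [Nonempty ι]
    {a : ι → E} {r : ℝ} (h : ∀ y : E, ‖y‖ = 1 → ∃ i, ⟪a i, y⟫ ≤ -r) :
    Metric.closedBall 0 r ⊆ convexHull ℝ (range a) := by
  intro v hv
  rw [mem_closedBall_zero_iff] at hv
  by_contra hvs
  obtain ⟨y, hy⟩ := exists_inner_lt_of_notMem (convex_convexHull ℝ _)
    ((finite_range a).isClosed_convexHull ℝ) hvs
  have hmem : ∀ i, a i ∈ convexHull ℝ (range a) := fun i => subset_convexHull ℝ _ ⟨i, rfl⟩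
  have hy0 : y ≠ 0 := by
    rintro rfl
    simpa using hy _ (hmem (Classical.arbitrary ι))
  have hunit : ‖‖y‖⁻¹ • y‖ = 1 := by
    rw [norm_smul, norm_inv, norm_norm, inv_mul_cancel₀ (norm_ne_zero_iff.2 hy0)]
  obtain ⟨i, hi⟩ := h _ hunit
  have hlt : ⟪v, ‖y‖⁻¹ • y⟫ < ⟪a i, ‖y‖⁻¹ • y⟫ := by
    simp only [real_inner_smul_right]
    exact mul_lt_mul_of_pos_left (hy _ (hmem i)) (by positivity)
  have hge : -‖v‖ ≤ ⟪v, ‖y‖⁻¹ • y⟫ := by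
    simpa [hunit] using neg_le_of_abs_le (abs_real_inner_le_norm v (‖y‖⁻¹ • y))
  linarith

end Separation

theorem norm_le_one_of_mem_convexHull_range {ι E : Type*} [SeminormedAddCommGroup E]
    [NormedSpace ℝ E] {a : ι → E} (ha : ∀ i, ‖a i‖ ≤ 1) {v : E}
    (hv : v ∈ convexHull ℝ (range a)) : ‖v‖ ≤ 1 := by
  simpa using (convex_closedBall (0 : E) 1).convexHull_subset_iff.2
    (range_subset_iff.2 fun i => by simpa using ha i) hv

theorem exists_mem_stdSimplex_sum_smul_eq {ι E : Type*} [Fintype ι] [AddCommGroup E]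
    [Module ℝ E] {a : ι → E} {v : E} (hv : v ∈ convexHull ℝ (range a)) :
    ∃ μ ∈ stdSimplex ℝ ι, ∑ i, μ i • a i = v := by
  classical
  have hrange : range a = range (Fintype.linearCombination ℝ a ∘ fun i => Pi.single i 1) := by
    simp [Function.comp_def]
  rw [hrange, range_comp, ← LinearMap.image_convexHull, convexHull_rangle_single_eq_stdSimplex]
    at hv
  exact hv

section Sigma

variable {n : ℕ}

theorem abs_le_linf (x : Fin n → ℝ) (j : Fin n) : |x j| ≤ linf x :=
  le_ciSup (f := fun k => |x k|) (finite_range _).bddAbove j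

theorem linf_nonneg (x : Fin n → ℝ) : 0 ≤ linf x :=
  Real.iSup_nonneg fun _ => abs_nonneg _

theorem linf_smul (c : ℝ) (x : Fin n → ℝ) : linf (c • x) = |c| * linf x := by
  simp only [linf, Pi.smul_apply, smul_eq_mul, abs_mul, Real.mul_iSup_of_nonneg (abs_nonneg c)]

theorem div_linf_le_sigmaJ {S : Submodule ℝ (Fin n → ℝ)} {x : Fin n → ℝ} (hxS : x ∈ S)
    (hx : 0 ≤ x) (j : Fin n) : x j / linf x ≤ sigmaJ S j := by
  refine le_csSup ⟨1, ?_⟩ ⟨(linf x)⁻¹ • x, S.smul_mem _ hxS, fun k => ?_, ?_, ?_⟩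
  · rintro _ ⟨x, -, -, hx1, rfl⟩
    exact (le_abs_self _).trans ((abs_le_linf x j).trans hx1)
  · exact mul_nonneg (inv_nonneg.2 (linf_nonneg x)) (hx k)
  · rw [linf_smul, abs_inv, abs_of_nonneg (linf_nonneg x)]
    exact inv_mul_le_one_of_le₀ le_rfl (linf_nonneg x)
  · simp [div_eq_inv_mul]

theorem le_sigmaCond {S : Set (Fin n → ℝ)} {t : ℝ} (ht : t ≤ 1)
    (h : ∀ j ∈ maxSupport S, t ≤ sigmaJ S j) : t ≤ sigmaCond S := by
  unfold sigmaCond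
  split_ifs with hS
  · exact ht
  · exact le_csInf ((nonempty_iff_ne_empty.2 hS).image _) (by rintro _ ⟨j, hj, rfl⟩; exact h j hj)

theorem mul_linf_add_smul_single_le {μ : Fin n → ℝ} (hμ : μ ∈ stdSimplex ℝ (Fin n)) {r : ℝ}
    (hr : 0 ≤ r) (hr1 : r ≤ 1) (j : Fin n) :
    r * linf (μ + r • Pi.single j 1) ≤ μ j + r := by
  have : Nonempty (Fin n) := ⟨j⟩
  rw [linf, Real.mul_iSup_of_nonneg hr]
  refine ciSup_le fun k => ?_
  have hμk : μ k ≤ 1 := hμ.2 ▸ Finset.single_le_sum (fun i _ => hμ.1 i) (Finset.mem_univ k)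
  rcases eq_or_ne k j with rfl | hk
  · simp only [Pi.add_apply, Pi.smul_apply, Pi.single_eq_same, smul_eq_mul, mul_one]
    rw [abs_of_nonneg (add_nonneg (hμ.1 k) hr)]
    nlinarith [hμ.1 k]
  · simp only [Pi.add_apply, Pi.smul_apply, Pi.single_eq_of_ne hk, smul_eq_mul, mul_zero,
      add_zero, abs_of_nonneg (hμ.1 k)]
    nlinarith [hμ.1 j]

end Sigma

section Columns

variable {m n : ℕ}

def euclideanCol (A : Matrix (Fin m) (Fin n) ℝ) (i : Fin n) : EuclideanSpace ℝ (Fin m) :=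
  WithLp.toLp 2 (A.col i)

theorem eNorm_eq_norm (y : Fin m → ℝ) : eNorm y = ‖WithLp.toLp 2 y‖ := by
  simp [eNorm, EuclideanSpace.norm_eq]

theorem inner_euclideanCol (A : Matrix (Fin m) (Fin n) ℝ) (i : Fin n)
    (y : EuclideanSpace ℝ (Fin m)) :
    ⟪euclideanCol A i, y⟫ = ∑ k, A k i * y k := by
  simp [euclideanCol, col_apply, PiLp.inner_apply, mul_comm]

theorem mulVec_eq_ofLp_sum_smul_euclideanCol (A : Matrix (Fin m) (Fin n) ℝ) (x : Fin n → ℝ) :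
    A *ᵥ x = WithLp.ofLp (∑ i, x i • euclideanCol A i) := by
  ext k
  simp [euclideanCol, col_apply, mulVec, dotProduct, mul_comm]

theorem exists_inner_euclideanCol_le_rho [Nonempty (Fin n)] (A : Matrix (Fin m) (Fin n) ℝ)
    {y : EuclideanSpace ℝ (Fin m)} (hy : ‖y‖ = 1) : ∃ i, ⟪euclideanCol A i, y⟫ ≤ rho A := by
  obtain ⟨i, hi⟩ := exists_eq_ciInf_of_finite (f := fun i => ⟪euclideanCol A i, y⟫)
  refine ⟨i, hi ▸ le_csSup ?_ ⟨WithLp.ofLp y, by simpa [eNorm_eq_norm] using hy, ?_⟩⟩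
  · let i₀ := Classical.arbitrary (Fin n)
    refine ⟨‖euclideanCol A i₀‖, ?_⟩
    rintro _ ⟨z, hz, rfl⟩
    calc ⨅ i, ∑ k, A k i * z k ≤ ∑ k, A k i₀ * z k := ciInf_le (finite_range _).bddBelow i₀
      _ = ⟪euclideanCol A i₀, WithLp.toLp 2 z⟫ := (inner_euclideanCol A i₀ _).symm
      _ ≤ ‖euclideanCol A i₀‖ := by
        simpa [← eNorm_eq_norm, hz] using
          real_inner_le_norm (euclideanCol A i₀) (WithLp.toLp 2 z)
  · simp [inner_euclideanCol]

theorem le_sigmaJ_of_sum_smul_euclideanCol_eq (A : Matrix (Fin m) (Fin n) ℝ) {μ : Fin n → ℝ}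
    (hμ : μ ∈ stdSimplex ℝ (Fin n)) {r : ℝ} (hr : 0 < r) (hr1 : r ≤ 1) {j : Fin n}
    (hsum : ∑ i, μ i • euclideanCol A i = -r • euclideanCol A j) :
    r ≤ sigmaJ (LinearMap.ker A.mulVecLin : Set (Fin n → ℝ)) j := by
  set x := μ + r • Pi.single j 1
  have hxj : x j = μ j + r := by simp [x]
  have hx0 : 0 ≤ x := add_nonneg hμ.1 (smul_nonneg hr.le (Pi.single_nonneg.2 zero_le_one))
  have hxL : x ∈ LinearMap.ker A.mulVecLin := by
    rw [LinearMap.mem_ker, mulVecLin_apply, mulVec_eq_ofLp_sum_smul_euclideanCol]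
    simp [x, add_smul, Finset.sum_add_distrib, hsum, Pi.single_apply]
  have hlinf : 0 < linf x :=
    (by linarith [hμ.1 j] : 0 < x j).trans_le ((le_abs_self _).trans (abs_le_linf x j))
  calc r ≤ x j / linf x :=
        (le_div_iff₀ hlinf).2 (hxj ▸ mul_linf_add_smul_single_le hμ hr.le hr1 j)
    _ ≤ sigmaJ _ j := div_linf_le_sigmaJ hxL hx0 j

end Columns

theorem abs_rho_le_sigma_general {m n : ℕ} (hn : 0 < n) (A : Matrix (Fin m) (Fin n) ℝ)
    (hcols : ∀ i, eNorm (fun k => A k i) = 1)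
    (hneg : rho A < 0) :
    |rho A| ≤ sigmaCond ((LinearMap.ker A.mulVecLin : Submodule ℝ (Fin n → ℝ)) :
      Set (Fin n → ℝ)) := by
  have : Nonempty (Fin n) := ⟨⟨0, hn⟩⟩
  have hr : 0 < |rho A| := abs_pos.2 hneg.ne
  have hnorm : ∀ i, ‖euclideanCol A i‖ = 1 := fun i => (eNorm_eq_norm _).symm.trans (hcols i)
  have hhull : ∀ j, -|rho A| • euclideanCol A j ∈ convexHull ℝ (range (euclideanCol A)) := by
    refine fun j => closedBall_zero_subset_convexHull_range (r := |rho A|) (fun y hy => ?_) ?_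
    · simpa [abs_of_neg hneg] using exists_inner_euclideanCol_le_rho A hy
    · simp [norm_smul, hnorm, abs_of_pos hr]
  have hr1 : |rho A| ≤ 1 := by
    simpa [norm_smul, hnorm, abs_of_pos hr] using
      norm_le_one_of_mem_convexHull_range (fun i => (hnorm i).le) (hhull ⟨0, hn⟩)
  refine le_sigmaCond hr1 fun j _ => ?_
  obtain ⟨μ, hμ, hsum⟩ := exists_mem_stdSimplex_sum_smul_eq (hhull j)
  exact le_sigmaJ_of_sum_smul_euclideanCol_eq A hμ hr hr1 hsum

/-- For a full row-rank matrix `A` with unit columns and `L = {x : Ax = 0}`: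
if `ρ(A) < 0` then `|ρ(A)| ≤ σ(L)`. -/
theorem abs_rho_le_sigma {m n : ℕ} (hn : 0 < n) (A : Matrix (Fin m) (Fin n) ℝ)
    (hrank : A.rank = m) (hcols : ∀ i, eNorm (fun k => A k i) = 1)
    (hneg : rho A < 0) :
    |rho A| ≤ sigmaCond ((LinearMap.ker A.mulVecLin : Submodule ℝ (Fin n → ℝ)) :
      Set (Fin n → ℝ)) :=
  abs_rho_le_sigma_general hn A hcols hneg

end
end

section
/- For 0 < ε < 1, let A = (1/√(1+ε²)) · [[1, 1, −1, −1], [ε, −ε, ε, −ε]] ∈ ℝ^{2×4} and let L = {x ∈ ℝ⁴ : Ax = 0}. Then ρ(A) = −ε/√(1+ε²) and σ(L) = 1. (In particular, σ(L) can be arbitrarily larger than |ρ(A)|.) -/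
noncomputable section
open Matrix

/-- The matrix `A = (1/√(1+ε²)) ⬝ [[1, 1, −1, −1], [ε, −ε, ε, −ε]]`. -/
def A18 (ε : ℝ) : Matrix (Fin 2) (Fin 4) ℝ :=
  (1 / Real.sqrt (1 + ε ^ 2)) • !![1, 1, -1, -1; ε, -ε, ε, -ε]

/-- For `0 < ε < 1` and `A = (1/√(1+ε²)) ⬝ [[1, 1, −1, −1], [ε, −ε, ε, −ε]]` with
`L = {x ∈ ℝ⁴ : Ax = 0}`, one has `ρ(A) = −ε/√(1+ε²)` and `σ(L) = 1`. -/
theorem rho_and_sigma_of_A18 (ε : ℝ) (hε0 : 0 < ε) (hε1 : ε < 1) :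
    rho (A18 ε) = -(ε / Real.sqrt (1 + ε ^ 2)) ∧
      sigmaCond ((LinearMap.ker (A18 ε).mulVecLin : Submodule ℝ (Fin 4 → ℝ)) :
        Set (Fin 4 → ℝ)) = 1 := by
  have hd : (0:ℝ) < 1 + ε ^ 2 := by positivity
  have hs0 : 0 < Real.sqrt (1 + ε ^ 2) := Real.sqrt_pos.2 hd
  have hsi : 0 < (Real.sqrt (1 + ε ^ 2))⁻¹ := inv_pos.2 hs0
  constructor
  · -- rho
    set S := {t | ∃ y : Fin 2 → ℝ, eNorm y = 1 ∧ t = ⨅ i, ∑ k, A18 ε k i * y k} with hS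
    have hub : ∀ t ∈ S, t ≤ -(ε / Real.sqrt (1 + ε ^ 2)) := by
      rintro t ⟨y, hy, rfl⟩
      have hy2 : y 0 ^ 2 + y 1 ^ 2 = 1 := by
        have h := hy
        unfold eNorm at h
        rw [Fin.sum_univ_two] at h
        exact Real.sqrt_eq_one.mp h
      have habs : ε ≤ |y 0| + ε * |y 1| := by
        nlinarith [abs_nonneg (y 0), abs_nonneg (y 1), sq_abs (y 0), sq_abs (y 1),
          sq_nonneg (|y 0| + |y 1| - 1), sq_nonneg (|y 0| + |y 1|),
          mul_nonneg (abs_nonneg (y 0)) (abs_nonneg (y 1))]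
      have key : ∃ i : Fin 4, (∑ k, A18 ε k i * y k) ≤ -(ε / Real.sqrt (1 + ε ^ 2)) := by
        rcases le_or_gt 0 (y 0) with h0 | h0 <;> rcases le_or_gt 0 (y 1) with h1 | h1
        · refine ⟨3, ?_⟩
          rw [abs_of_nonneg h0, abs_of_nonneg h1] at habs
          simp only [A18, Fin.sum_univ_two]
          simp
          rw [div_eq_mul_inv]
          nlinarith [mul_nonneg hsi.le (by linarith : (0:ℝ) ≤ y 0 + ε * y 1 - ε)]
        · refine ⟨2, ?_⟩
          rw [abs_of_nonneg h0, abs_of_neg h1] at habs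
          simp [A18, Fin.sum_univ_two]
          rw [div_eq_mul_inv]
          nlinarith [mul_nonneg hsi.le (by linarith : (0:ℝ) ≤ y 0 - ε * y 1 - ε)]
        · refine ⟨1, ?_⟩
          rw [abs_of_neg h0, abs_of_nonneg h1] at habs
          simp [A18, Fin.sum_univ_two]
          rw [div_eq_mul_inv]
          nlinarith [mul_nonneg hsi.le (by linarith : (0:ℝ) ≤ -y 0 + ε * y 1 - ε)]
        · refine ⟨0, ?_⟩
          rw [abs_of_neg h0, abs_of_neg h1] at habs
          simp [A18, Fin.sum_univ_two]
          rw [div_eq_mul_inv]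
          nlinarith [mul_nonneg hsi.le (by linarith : (0:ℝ) ≤ -y 0 - ε * y 1 - ε)]
      obtain ⟨i, hi⟩ := key
      exact le_trans (ciInf_le (Set.finite_range _).bddBelow i) hi
    have hmem : -(ε / Real.sqrt (1 + ε ^ 2)) ∈ S := by
      refine ⟨![0, 1], ?_, ?_⟩
      · unfold eNorm
        rw [Fin.sum_univ_two]
        norm_num
      · refine le_antisymm ?_ ?_
        · apply le_ciInf
          intro i
          fin_cases i <;> simp [A18, Fin.sum_univ_two] <;> rw [div_eq_mul_inv] <;>
            nlinarith [mul_pos hε0 hsi]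
        · refine le_trans (ciInf_le (Set.finite_range _).bddBelow 1) ?_
          simp [A18, Fin.sum_univ_two]
          rw [div_eq_mul_inv]
          ring_nf
          exact le_rfl
    have hrho : rho (A18 ε) = sSup S := rfl
    rw [hrho]
    exact le_antisymm (csSup_le ⟨_, hmem⟩ hub) (le_csSup ⟨_, hub⟩ hmem)
  · -- sigma
    set K := ((LinearMap.ker (A18 ε).mulVecLin : Submodule ℝ (Fin 4 → ℝ)) :
        Set (Fin 4 → ℝ)) with hK
    have h1K : (fun _ => (1:ℝ)) ∈ K := by
      simp only [hK, SetLike.mem_coe, LinearMap.mem_ker]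
      funext k
      fin_cases k <;>
        simp [A18, mulVecLin, Matrix.mulVec, dotProduct, Fin.sum_univ_four]
    have hlinf1 : linf (fun _ : Fin 4 => (1:ℝ)) = 1 := by
      unfold linf
      simp
    have hσ : ∀ j, sigmaJ K j = 1 := by
      intro j
      have hub : ∀ t ∈ {t | ∃ x ∈ K, (∀ k, 0 ≤ x k) ∧ linf x ≤ 1 ∧ x j = t}, t ≤ 1 := by
        rintro t ⟨x, _, hx0, hxl, rfl⟩
        have h2 : |x j| ≤ linf x := by
          unfold linf
          exact le_ciSup (Set.finite_range fun k => |x k|).bddAbove j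
        exact le_trans (le_trans (le_abs_self _) h2) hxl
      have hmem : (1:ℝ) ∈ {t | ∃ x ∈ K, (∀ k, 0 ≤ x k) ∧ linf x ≤ 1 ∧ x j = t} :=
        ⟨fun _ => 1, h1K, fun _ => zero_le_one, hlinf1.le, rfl⟩
      exact le_antisymm (csSup_le ⟨_, hmem⟩ hub) (le_csSup ⟨_, hub⟩ hmem)
    have hJ : (0 : Fin 4) ∈ maxSupport K :=
      ⟨fun _ => 1, h1K, fun _ => zero_le_one, one_pos⟩
    have hne : maxSupport K ≠ ∅ := fun h => by rw [h] at hJ; exact hJ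
    unfold sigmaCond
    rw [if_neg hne]
    have himg : sigmaJ K '' maxSupport K = {1} := by
      apply Set.eq_singleton_iff_nonempty_unique_mem.mpr
      refine ⟨⟨sigmaJ K 0, Set.mem_image_of_mem _ hJ⟩, ?_⟩
      rintro t ⟨jj, _, rfl⟩
      exact hσ jj
    rw [himg]
    exact csInf_singleton 1


end
end
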